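/- arXiv:2402.08693 — 3 statements merged into one kernel-verified Lean document; each statement's English description precedes it below -/
import Mathlib

section
/- 3 · Σ_{n=1}^∞ (63n² - 27n + 4) / C(6n, 3n) = 40·π·√3/81 + 4, where the series converges absolutely. -/
/-!
Since `∫₀¹ (t (1 - t))ᵏ dt = 1 / ((2k + 1) C(2k, k))`, the `m`-th term `p(m) / C(6m, 3m)` of the
series, `p(m) = 63m² - 27m + 4`, equals `∫₀¹ p(m) (6m + 1) ((t (1 - t))³)ᵐ dt`. As
`(t (1 - t))³ ≤ 1/64`, dominated convergence moves the sum inside the integral, where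
`∑ₘ p(m) (6m + 1) yᵐ` is a rational function of `y` (write `p(m) (6m + 1)` in the basis
`C(m + k - 1, k)`, `k ≤ 3`). The resulting integral of a rational function of `t` has an elementary
antiderivative, whose only transcendental part is an `arctan` contributing the `π √3`.
-/

open Real MeasureTheory Set

lemma mul_one_sub_le_quarter (t : ℝ) : t * (1 - t) ≤ 1 / 4 := by
  nlinarith [sq_nonneg (2 * t - 1)]

lemma hasDerivAt_mul_one_sub (t : ℝ) : HasDerivAt (fun x : ℝ ↦ x * (1 - x)) (1 - 2 * t) t :=
  ((hasDerivAt_id' t).mul ((hasDerivAt_id' t).const_sub 1)).congr_deriv (by ring)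

lemma integral_mul_one_sub_pow_succ (k : ℕ) :
    ∫ t in (0:ℝ)..1, (t * (1 - t)) ^ (k + 1)
      = (k + 1) / (4 * k + 6) * ∫ t in (0:ℝ)..1, (t * (1 - t)) ^ k := by
  have hderiv : ∀ t ∈ uIcc (0:ℝ) 1, HasDerivAt (fun t ↦ (t * (1 - t)) ^ (k + 1) * (2 * t - 1))
      ((4 * k + 6) * (t * (1 - t)) ^ (k + 1) - (k + 1) * (t * (1 - t)) ^ k) t := fun t _ ↦
    (((hasDerivAt_mul_one_sub t).fun_pow (k + 1)).mul
      (((hasDerivAt_id' t).const_mul 2).sub_const 1)).congr_deriv (by push_cast; ring)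
  have hint : ∀ j : ℕ, IntervalIntegrable (fun t : ℝ ↦ (t * (1 - t)) ^ j) volume 0 1 :=
    fun j ↦ (by fun_prop : Continuous fun t : ℝ ↦ (t * (1 - t)) ^ j).intervalIntegrable 0 1
  have hFTC := intervalIntegral.integral_eq_sub_of_hasDerivAt hderiv
    (((hint (k + 1)).const_mul _).sub ((hint k).const_mul _))
  rw [intervalIntegral.integral_sub ((hint (k + 1)).const_mul _) ((hint k).const_mul _),
    intervalIntegral.integral_const_mul, intervalIntegral.integral_const_mul] at hFTC
  norm_num at hFTC
  field_simp
  linarith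

lemma integral_mul_one_sub_pow (k : ℕ) :
    ∫ t in (0:ℝ)..1, (t * (1 - t)) ^ k = ((2 * k + 1) * k.centralBinom : ℝ)⁻¹ := by
  induction k with
  | zero => simp
  | succ k ih =>
    have hrec : ((k + 1) * (k + 1).centralBinom : ℝ) = 2 * (2 * k + 1) * k.centralBinom := by
      exact_mod_cast Nat.succ_mul_centralBinom_succ k
    have hC : (k.centralBinom : ℝ) ≠ 0 := by exact_mod_cast k.centralBinom_ne_zero
    have hC' : ((k + 1).centralBinom : ℝ) ≠ 0 := by exact_mod_cast (k + 1).centralBinom_ne_zero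
    rw [integral_mul_one_sub_pow_succ, ih]
    push_cast
    field_simp
    linear_combination (2 * (k : ℝ) + 3) * hrec

lemma div_centralBinom_eq_integral (c : ℝ) (k : ℕ) :
    c / k.centralBinom = ∫ t in (0:ℝ)..1, c * (2 * k + 1) * (t * (1 - t)) ^ k := by
  have hk : (2 * k + 1 : ℝ) ≠ 0 := by positivity
  rw [intervalIntegral.integral_const_mul, integral_mul_one_sub_pow]
  field_simp

lemma six_mul_choose_three (n : ℕ) : 6 * (n + 3).choose 3 = (n + 1) * (n + 2) * (n + 3) := by
  have := Nat.descFactorial_eq_factorial_mul_choose (n + 3) 3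
  simp [Nat.descFactorial_succ, Nat.factorial_succ] at this
  linarith

lemma two_mul_choose_two (n : ℕ) : 2 * (n + 2).choose 2 = (n + 1) * (n + 2) := by
  have := Nat.descFactorial_eq_factorial_mul_choose (n + 2) 2
  simp [Nat.descFactorial_succ, Nat.factorial_succ] at this
  linarith

def generatingFunction {K : Type*} [Field K] (y : K) : K :=
  (280 * y + 1506 * y ^ 2 + 486 * y ^ 3 - 4 * y ^ 4) / (1 - y) ^ 4

lemma hasSum_cubic_mul_pow_succ {𝕜 : Type*} [NormedField 𝕜] [CompleteSpace 𝕜] {y : 𝕜}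
    (hy : ‖y‖ < 1) :
    HasSum (fun n : ℕ ↦
        (63 * ((n : 𝕜) + 1) ^ 2 - 27 * ((n : 𝕜) + 1) + 4) * (6 * ((n : 𝕜) + 1) + 1) * y ^ (n + 1))
      (generatingFunction y) := by
  have h k := hasSum_choose_mul_geometric_of_norm_lt_one k hy
  have hy1 : 1 - y ≠ 0 := sub_ne_zero.2 (by rintro rfl; simp at hy)
  -- `p(m) (6m + 1) = 2268 C(m + 2, 3) - 2466 C(m + 1, 2) + 474 m + 4` with `m = n + 1`
  have hsum := ((((h 3).mul_left 2268).sub ((h 2).mul_left 2466)).add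
    ((h 1).mul_left 474)).add ((h 0).mul_left 4) |>.mul_left y
  rw [show generatingFunction y
      = y * (2268 * (1 / (1 - y) ^ 4) - 2466 * (1 / (1 - y) ^ 3) + 474 * (1 / (1 - y) ^ 2)
        + 4 * (1 / (1 - y) ^ 1)) by unfold generatingFunction; field_simp; ring]
  refine hsum.congr_fun fun n ↦ ?_
  have h3 : (6 * (n + 3).choose 3 : 𝕜) = (n + 1) * (n + 2) * (n + 3) := by
    exact_mod_cast congrArg (Nat.cast : ℕ → 𝕜) (six_mul_choose_three n)
  have h2 : (2 * (n + 2).choose 2 : 𝕜) = (n + 1) * (n + 2) := by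
    exact_mod_cast congrArg (Nat.cast : ℕ → 𝕜) (two_mul_choose_two n)
  simp only [Nat.choose_one_right, add_zero, Nat.choose_zero_right]
  push_cast
  linear_combination (-378 * y ^ (n + 1)) * h3 + (1233 * y ^ (n + 1)) * h2

lemma hasSum_div_choose :
    HasSum (fun n : ℕ ↦ (63 * ((n : ℝ) + 1) ^ 2 - 27 * ((n : ℝ) + 1) + 4) /
        (Nat.choose (6 * (n + 1)) (3 * (n + 1)) : ℝ))
      (∫ t in (0:ℝ)..1, generatingFunction ((t * (1 - t)) ^ 3)) := by
  set c : ℕ → ℝ := fun n ↦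
    (63 * ((n : ℝ) + 1) ^ 2 - 27 * ((n : ℝ) + 1) + 4) * (6 * ((n : ℝ) + 1) + 1) with hc
  have hc_nonneg (n : ℕ) : 0 ≤ c n :=
    mul_nonneg (by nlinarith [sq_nonneg (42 * (n : ℝ) + 33)]) (by positivity)
  have hterm (n : ℕ) : (63 * ((n : ℝ) + 1) ^ 2 - 27 * ((n : ℝ) + 1) + 4) /
      (Nat.choose (6 * (n + 1)) (3 * (n + 1)) : ℝ)
      = ∫ t in (0:ℝ)..1, c n * ((t * (1 - t)) ^ 3) ^ (n + 1) := by
    rw [show 6 * (n + 1) = 2 * (3 * (n + 1)) by ring, ← Nat.centralBinom_eq_two_mul_choose,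
      div_centralBinom_eq_integral]
    refine intervalIntegral.integral_congr fun t _ ↦ ?_
    simp only [hc, pow_mul]
    push_cast
    ring
  simp only [hterm]
  have hu (t : ℝ) (ht : t ∈ uIoc (0:ℝ) 1) :
      0 ≤ (t * (1 - t)) ^ 3 ∧ (t * (1 - t)) ^ 3 ≤ (1 / 4) ^ 3 := by
    rw [uIoc_of_le zero_le_one] at ht
    have h0 : 0 ≤ t * (1 - t) := mul_nonneg ht.1.le (by linarith [ht.2])
    exact ⟨by positivity, pow_le_pow_left₀ h0 (mul_one_sub_le_quarter t) 3⟩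
  refine intervalIntegral.hasSum_integral_of_dominated_convergence
    (fun n _ ↦ c n * ((1 / 4) ^ 3) ^ (n + 1)) (fun n ↦ by fun_prop) (fun n ↦ ?_)
    (.of_forall fun _ _ ↦ (hasSum_cubic_mul_pow_succ (by norm_num)).summable)
    intervalIntegrable_const (.of_forall fun t ht ↦ ?_)
  · refine .of_forall fun t ht ↦ ?_
    rw [norm_mul, norm_pow, Real.norm_of_nonneg (hc_nonneg n), Real.norm_of_nonneg (hu t ht).1]
    exact mul_le_mul_of_nonneg_left (pow_le_pow_left₀ (hu t ht).1 (hu t ht).2 _) (hc_nonneg n)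
  · refine hasSum_cubic_mul_pow_succ ?_
    rw [Real.norm_of_nonneg (hu t ht).1]
    linarith [(hu t ht).2]

noncomputable def antiderivAux (u : ℝ) : ℝ :=
  2 + (-13/9 + 55/27 * u - 100/27 * u ^ 2) / (1 - u) ^ 3
    - (11/9 + 31/9 * u + 7 * u ^ 2 + 154/9 * u ^ 3 + 170/9 * u ^ 4 + 10/3 * u ^ 5)
      / (1 + u + u ^ 2) ^ 3

/-- With `u = t (1 - t)` one has `(1 - 2t)² = 1 - 4u` and `3 + (2t - 1)² = 4 (1 - u)`, so the
derivative `-2 g(u) + (1 - 4u) g'(u) + 20 / (27 (1 - u))` of `antideriv` (where `g = antiderivAux`)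
is a rational function of `u` alone. -/
noncomputable def antideriv (t : ℝ) : ℝ :=
  (1 - 2 * t) * antiderivAux (t * (1 - t)) + 40 * √3 / 81 * arctan ((2 * t - 1) / √3)

lemma hasDerivAt_antideriv {t : ℝ} (ht : t * (1 - t) ≠ 1) :
    HasDerivAt antideriv (generatingFunction ((t * (1 - t)) ^ 3)) t := by
  have hu := hasDerivAt_mul_one_sub t
  have hA := ((hasDerivAt_const t (-13/9 : ℝ)).fun_add (hu.const_mul (55/27))).fun_sub
    ((hu.fun_pow 2).const_mul (100/27))
  have hB := (((((hasDerivAt_const t (11/9 : ℝ)).fun_add (hu.const_mul (31/9))).fun_add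
    ((hu.fun_pow 2).const_mul 7)).fun_add ((hu.fun_pow 3).const_mul (154/9))).fun_add
    ((hu.fun_pow 4).const_mul (170/9))).fun_add ((hu.fun_pow 5).const_mul (10/3))
  have hDA := (hu.const_sub 1).fun_pow 3
  have hDB := (((hasDerivAt_const t (1 : ℝ)).fun_add hu).fun_add (hu.fun_pow 2)).fun_pow 3
  have h1u : 1 - t * (1 - t) ≠ 0 := sub_ne_zero.2 ht.symm
  have hq : 1 + t * (1 - t) + (t * (1 - t)) ^ 2 ≠ 0 := by
    nlinarith [sq_nonneg (2 * (t * (1 - t)) + 1)]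
  have hg := ((hasDerivAt_const t (2 : ℝ)).fun_add
    (hA.fun_div hDA (pow_ne_zero 3 h1u))).fun_sub (hB.fun_div hDB (pow_ne_zero 3 hq))
  have hlin := ((hasDerivAt_id' t).const_mul 2).const_sub 1
  have harg := (((hasDerivAt_id' t).const_mul 2).sub_const 1).div_const √3
  have h : HasDerivAt antideriv _ t :=
    (hlin.fun_mul hg).fun_add (harg.arctan.const_mul (40 * √3 / 81))
  refine h.congr_deriv ?_
  have hs : √3 ^ 2 = 3 := sq_sqrt (by norm_num)
  have h3t : 3 + (2 * t - 1) ^ 2 ≠ 0 := by positivity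
  have hq' : 1 + t * (1 - t) + t ^ 2 * (1 - t) ^ 2 ≠ 0 := by rwa [mul_pow] at hq
  have hu3 : 1 - t ^ 3 * (1 - t) ^ 3 ≠ 0 := by
    rw [← mul_pow, show 1 - (t * (1 - t)) ^ 3
      = (1 - t * (1 - t)) * (1 + t * (1 - t) + (t * (1 - t)) ^ 2) by ring]
    exact mul_ne_zero h1u hq
  simp only [generatingFunction, div_pow, hs]
  field_simp
  ring

lemma integral_generatingFunction :
    ∫ t in (0:ℝ)..1, generatingFunction ((t * (1 - t)) ^ 3) = 4 / 3 + 40 * π * √3 / 243 := by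
  have hlt (t : ℝ) : t * (1 - t) < 1 := by linarith [mul_one_sub_le_quarter t]
  have hcont : Continuous fun t : ℝ ↦ generatingFunction ((t * (1 - t)) ^ 3) := by
    refine Continuous.div (by fun_prop) (by fun_prop) fun t ↦ pow_ne_zero 4 (sub_ne_zero.2 ?_)
    simpa using ((Odd.pow_lt_pow (n := 3) (by decide)).2 (hlt t)).ne'
  rw [intervalIntegral.integral_eq_sub_of_hasDerivAt
    (fun t _ ↦ hasDerivAt_antideriv (hlt t).ne) (hcont.intervalIntegrable 0 1)]
  norm_num [antideriv, antiderivAux, arctan_inv_sqrt_three]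
  rw [neg_div, one_div, arctan_neg, arctan_inv_sqrt_three]
  ring

theorem stmt11 :
    Summable (fun n : ℕ =>
      |(63 * ((n : ℝ) + 1) ^ 2 - 27 * ((n : ℝ) + 1) + 4) /
        (Nat.choose (6 * (n + 1)) (3 * (n + 1)) : ℝ)|) ∧
    3 * ∑' n : ℕ,
        (63 * ((n : ℝ) + 1) ^ 2 - 27 * ((n : ℝ) + 1) + 4) /
          (Nat.choose (6 * (n + 1)) (3 * (n + 1)) : ℝ) =
      40 * π * Real.sqrt 3 / 81 + 4 := by
  refine ⟨hasSum_div_choose.summable.abs, ?_⟩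
  rw [hasSum_div_choose.tsum_eq, integral_generatingFunction]
  ring
end

section
/- Σ_{n=0}^∞ (213125n⁴ - 278000n³ + 139975n² - 26800n + 1596) / C(10n, 5n) = 1120·π·√3/81 + 1728, where the series converges absolutely. -/
/-!
The summand is `∑_{j<5} b (5n+j) + c n - c (n+1)`, where `b m = (12400 - 11840 m) / (3 C(2m,m))`
and `c n` is a polynomial over `C(10n,5n)`, so the series is Lehmer's series `∑ b m` plus
`c 0 = -1152`. Lehmer's series is summed under the integral sign using
`1 / ((2m+1) C(2m,m)) = ∫₀¹ (x(1-x))^m dx`: the integrand becomes a rational function in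
`x² - x + 1`, whose integral over `[0,1]` produces `arctan (1/√3) = π/6`.
-/

open Real Polynomial Finset
open scoped Nat

theorem Summable.hasSum_sub_succ {G : Type*} [AddCommGroup G] [TopologicalSpace G]
    [IsTopologicalAddGroup G] [T2Space G] {g : ℕ → G} (hg : Summable g) :
    HasSum (fun n ↦ g n - g (n + 1)) (g 0) := by
  have h := hg.hasSum.sub ((summable_nat_add_iff 1).mpr hg).hasSum
  rwa [hg.tsum_eq_zero_add, add_sub_cancel_right] at h

theorem HasSum.sum_range_mul_add {M : Type*} [AddCommMonoid M] [TopologicalSpace M]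
    [ContinuousAdd M] [RegularSpace M] {f : ℕ → M} {a : M} (hf : HasSum f a) (k : ℕ) [NeZero k] :
    HasSum (fun n ↦ ∑ j ∈ range k, f (k * n + j)) a := by
  refine ((Nat.divModEquiv k).symm.hasSum_iff.mpr hf).prod_fiberwise fun n ↦ ?_
  simpa [Fin.sum_univ_eq_sum_range (fun j ↦ f (k * n + j)), mul_comm] using
    hasSum_fintype (fun j : Fin k ↦ f (k * n + j))

theorem Polynomial.summable_eval_mul_geometric {R : Type*} [NormedRing R]
    [HasSummableGeomSeries R] (P : R[X]) {r : R} (hr : ‖r‖ < 1) :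
    Summable fun n : ℕ ↦ P.eval (n : R) * r ^ n := by
  simp_rw [eval_eq_sum_range, Finset.sum_mul, mul_assoc]
  exact summable_sum fun i _ ↦ (summable_pow_mul_geometric_of_norm_lt_one i hr).mul_left _

theorem Nat.two_pow_le_centralBinom (n : ℕ) : 2 ^ n ≤ n.centralBinom := by
  induction n with
  | zero => simp
  | succ n ih =>
    have h := Nat.succ_mul_centralBinom_succ n
    have : (n + 1) * 2 ^ (n + 1) ≤ (n + 1) * (n + 1).centralBinom := by
      rw [h, pow_succ]; nlinarith
    exact Nat.le_of_mul_le_mul_left this n.succ_pos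

theorem Polynomial.summable_eval_div_centralBinom_mul (P : ℝ[X]) {k : ℕ} (hk : 0 < k) :
    Summable fun n : ℕ ↦ P.eval (n : ℝ) / (k * n).centralBinom := by
  refine .of_norm_bounded (P.summable_eval_mul_geometric (r := 1 / 2) (by norm_num)).norm
    fun n ↦ ?_
  have hle : (2 : ℝ) ^ n ≤ (k * n).centralBinom := by
    exact_mod_cast (Nat.pow_le_pow_right two_pos (Nat.le_mul_of_pos_left n hk)).trans
      (Nat.two_pow_le_centralBinom _)
  rw [norm_div, norm_mul, norm_pow, Real.norm_natCast, one_div, norm_inv, Real.norm_two, inv_pow,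
    ← div_eq_mul_inv]
  exact div_le_div_of_nonneg_left (norm_nonneg _) (by positivity) hle

theorem hasDerivAt_sq_sub_self_add_one (x : ℝ) :
    HasDerivAt (fun y ↦ y ^ 2 - y + 1) (2 * x - 1) x := by
  simpa using ((hasDerivAt_pow 2 x).fun_sub (hasDerivAt_id' x)).add_const 1

theorem sq_sub_self_add_one_pos (x : ℝ) : 0 < x ^ 2 - x + 1 := by
  nlinarith [sq_nonneg (2 * x - 1)]

theorem hasDerivAt_arctan_two_mul_sub_one (x : ℝ) :
    HasDerivAt (fun y ↦ 2 / √3 * arctan ((2 * y - 1) / √3)) (1 / (x ^ 2 - x + 1)) x := by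
  have h3 : √3 ^ 2 = 3 := sq_sqrt (by norm_num)
  have hden : 1 + ((2 * x - 1) / √3) ^ 2 = 4 * (x ^ 2 - x + 1) / 3 := by
    rw [div_pow, h3]; ring
  refine (((((hasDerivAt_id' x).const_mul 2).sub_const 1).div_const √3).arctan.const_mul
    (2 / √3)).congr_deriv ?_
  have := (sq_sub_self_add_one_pos x).ne'
  rw [hden]
  field_simp
  norm_num

theorem hasDerivAt_div_sq_sub_self_add_one (x : ℝ) :
    HasDerivAt (fun y ↦ (2 * y - 1) / (y ^ 2 - y + 1))
      (3 / (x ^ 2 - x + 1) ^ 2 - 2 / (x ^ 2 - x + 1)) x := by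
  have hq := (sq_sub_self_add_one_pos x).ne'
  refine ((((hasDerivAt_id' x).const_mul 2).sub_const 1).div
    (hasDerivAt_sq_sub_self_add_one x) hq).congr_deriv ?_
  field_simp
  ring

theorem hasDerivAt_div_sq_sub_self_add_one_sq (x : ℝ) :
    HasDerivAt (fun y ↦ (2 * y - 1) / (y ^ 2 - y + 1) ^ 2)
      (6 / (x ^ 2 - x + 1) ^ 3 - 6 / (x ^ 2 - x + 1) ^ 2) x := by
  have hq := (sq_sub_self_add_one_pos x).ne'
  refine ((((hasDerivAt_id' x).const_mul 2).sub_const 1).div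
    ((hasDerivAt_sq_sub_self_add_one x).fun_pow 2) (pow_ne_zero 2 hq)).congr_deriv ?_
  -- the form to which `field_simp` normalises the denominator
  have hq' : x * (x - 1) + 1 ≠ 0 := by convert hq using 1; ring
  field_simp
  push_cast
  ring

theorem integral_rational_sq_sub_self_add_one (α β γ : ℝ) :
    ∫ x in (0 : ℝ)..1, (α / (x ^ 2 - x + 1) ^ 3 + β / (x ^ 2 - x + 1) ^ 2 + γ / (x ^ 2 - x + 1)) =
      α + 2 * β / 3 + (2 * α + 2 * β + 3 * γ) * (2 * π * √3 / 27) := by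
  have hG : ∀ x : ℝ, HasDerivAt (fun y ↦ α / 6 * ((2 * y - 1) / (y ^ 2 - y + 1) ^ 2) +
      (α + β) / 3 * ((2 * y - 1) / (y ^ 2 - y + 1)) +
      (2 * α + 2 * β + 3 * γ) / 3 * (2 / √3 * arctan ((2 * y - 1) / √3)))
      (α / (x ^ 2 - x + 1) ^ 3 + β / (x ^ 2 - x + 1) ^ 2 + γ / (x ^ 2 - x + 1)) x := fun x ↦ by
    refine ((((hasDerivAt_div_sq_sub_self_add_one_sq x).const_mul _).add
      ((hasDerivAt_div_sq_sub_self_add_one x).const_mul _)).add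
      ((hasDerivAt_arctan_two_mul_sub_one x).const_mul _)).congr_deriv ?_
    have hq := (sq_sub_self_add_one_pos x).ne'
    field_simp
    ring
  have hcont : Continuous fun x : ℝ ↦
      α / (x ^ 2 - x + 1) ^ 3 + β / (x ^ 2 - x + 1) ^ 2 + γ / (x ^ 2 - x + 1) := by
    have := fun x ↦ (sq_sub_self_add_one_pos x).ne'
    fun_prop (disch := simp [this])
  rw [intervalIntegral.integral_eq_sub_of_hasDerivAt (fun x _ ↦ hG x)
    (hcont.intervalIntegrable _ _)]
  have h3 : √3 ^ 2 = 3 := sq_sqrt (by norm_num)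
  norm_num [neg_div, one_div, arctan_neg, arctan_inv_sqrt_three]
  field_simp
  linear_combination -(72 * α * π + 72 * β * π + 108 * γ * π) * h3

theorem integral_pow_mul_one_sub_pow_succ (a b : ℕ) :
    ∫ x in (0 : ℝ)..1, x ^ a * (1 - x) ^ (b + 1) =
      (b + 1) / (a + 1) * ∫ x in (0 : ℝ)..1, x ^ (a + 1) * (1 - x) ^ b := by
  have hu : ∀ x ∈ Set.uIcc (0 : ℝ) 1,
      HasDerivAt (fun y : ℝ ↦ (1 - y) ^ (b + 1)) (-((b + 1) * (1 - x) ^ b)) x := fun x _ ↦ by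
    refine (((hasDerivAt_id' x).const_sub 1).fun_pow (b + 1)).congr_deriv ?_
    push_cast; ring
  have hv : ∀ x ∈ Set.uIcc (0 : ℝ) 1,
      HasDerivAt (fun y : ℝ ↦ y ^ (a + 1) / (a + 1)) (x ^ a) x := fun x _ ↦ by
    refine ((hasDerivAt_pow (a + 1) x).div_const ((a : ℝ) + 1)).congr_deriv ?_
    push_cast
    field_simp
  have hparts := intervalIntegral.integral_mul_deriv_eq_deriv_mul hu hv
    ((by fun_prop : Continuous fun x : ℝ ↦ -((b + 1) * (1 - x) ^ b)).intervalIntegrable _ _)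
    ((by fun_prop : Continuous fun x : ℝ ↦ x ^ a).intervalIntegrable _ _)
  simp only [one_pow, sub_self, zero_pow (Nat.succ_ne_zero _), zero_mul, zero_div, mul_zero,
    zero_sub, ← intervalIntegral.integral_neg] at hparts
  rw [intervalIntegral.integral_congr fun x _ ↦ mul_comm (x ^ a) _, hparts,
    ← intervalIntegral.integral_const_mul]
  congr 1 with x
  field_simp

theorem integral_pow_mul_one_sub_pow (a b : ℕ) :
    ∫ x in (0 : ℝ)..1, x ^ a * (1 - x) ^ b = (a ! * b ! : ℝ) / (a + b + 1)! := by
  induction b generalizing a with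
  | zero =>
    simp only [pow_zero, mul_one, integral_pow, one_pow, zero_pow (Nat.succ_ne_zero a), sub_zero,
      Nat.factorial_zero, add_zero, Nat.factorial_succ]
    push_cast
    field_simp
  | succ b ih =>
    rw [integral_pow_mul_one_sub_pow_succ, ih, show a + (b + 1) + 1 = a + 1 + b + 1 by ring,
      Nat.factorial_succ a, Nat.factorial_succ b]
    push_cast
    field_simp

theorem integral_mul_one_sub_pow_s12 (n : ℕ) :
    ∫ x in (0 : ℝ)..1, (x * (1 - x)) ^ n = 1 / ((2 * n + 1) * n.centralBinom) := by
  have h := Nat.choose_mul_factorial_mul_factorial (Nat.le_mul_of_pos_left n two_pos)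
  rw [two_mul, Nat.add_sub_cancel, ← two_mul, ← Nat.centralBinom_eq_two_mul_choose] at h
  simp_rw [mul_pow, integral_pow_mul_one_sub_pow, ← two_mul, Nat.factorial_succ, ← h]
  push_cast
  field_simp

theorem hasSum_linear_mul_odd_mul_geometric (a b : ℝ) {t : ℝ} (ht : ‖t‖ < 1) :
    HasSum (fun m : ℕ ↦ (a * m + b) * (2 * m + 1) * t ^ m)
      (4 * a / (1 - t) ^ 3 + (2 * b - 5 * a) / (1 - t) ^ 2 + (a - b) / (1 - t)) := by
  have h := (((hasSum_choose_mul_geometric_of_norm_lt_one 2 ht).mul_left (4 * a)).add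
    ((hasSum_choose_mul_geometric_of_norm_lt_one 1 ht).mul_left (2 * b - 5 * a))).add
    ((hasSum_choose_mul_geometric_of_norm_lt_one 0 ht).mul_left (a - b))
  have hterm : ∀ m : ℕ, (a * m + b) * (2 * m + 1) * t ^ m = 4 * a * ((m + 2).choose 2 * t ^ m) +
      (2 * b - 5 * a) * ((m + 1).choose 1 * t ^ m) + (a - b) * ((m + 0).choose 0 * t ^ m) := by
    intro m
    simp only [Nat.cast_choose_two, Nat.choose_one_right, Nat.choose_zero_right, add_zero]
    push_cast
    ring
  have hsum : 4 * a / (1 - t) ^ 3 + (2 * b - 5 * a) / (1 - t) ^ 2 + (a - b) / (1 - t) =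
      4 * a * (1 / (1 - t) ^ (2 + 1)) + (2 * b - 5 * a) * (1 / (1 - t) ^ (1 + 1)) +
        (a - b) * (1 / (1 - t) ^ (0 + 1)) := by
    ring
  rw [funext hterm, hsum]
  exact h

theorem hasSum_linear_div_centralBinom (a b : ℝ) :
    HasSum (fun m : ℕ ↦ (a * m + b) / m.centralBinom)
      (2 * (a + 2 * b) / 3 + 2 * π * √3 * (a + b) / 27) := by
  have hterm : ∀ m : ℕ, (a * m + b) / m.centralBinom =
      ∫ x in (0 : ℝ)..1, (a * m + b) * (2 * m + 1) * (x * (1 - x)) ^ m := fun m ↦ by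
    rw [intervalIntegral.integral_const_mul, integral_mul_one_sub_pow_s12]
    field_simp
  have hx : ∀ x ∈ Set.uIoc (0 : ℝ) 1, 0 ≤ x * (1 - x) ∧ x * (1 - x) ≤ 1 / 4 := fun x hx ↦ by
    rw [Set.uIoc_of_le zero_le_one] at hx
    exact ⟨mul_nonneg hx.1.le (by linarith [hx.2]), by nlinarith [sq_nonneg (2 * x - 1)]⟩
  have hlim := intervalIntegral.hasSum_integral_of_dominated_convergence
    (F := fun (m : ℕ) (x : ℝ) ↦ (a * m + b) * (2 * m + 1) * (x * (1 - x)) ^ m)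
    (f := fun x ↦ 4 * a / (x ^ 2 - x + 1) ^ 3 + (2 * b - 5 * a) / (x ^ 2 - x + 1) ^ 2 +
      (a - b) / (x ^ 2 - x + 1))
    (fun m _ ↦ ‖(a * m + b) * (2 * m + 1) * (1 / 4 : ℝ) ^ m‖)
    (fun m ↦ (by fun_prop : Continuous _).aestronglyMeasurable)
    (fun m ↦ .of_forall fun x hmem ↦ by
      obtain ⟨h0, h1⟩ := hx x hmem
      have hpow : ‖(x * (1 - x)) ^ m‖ ≤ ‖(1 / 4 : ℝ) ^ m‖ := by
        rw [norm_pow, norm_pow, Real.norm_of_nonneg h0, Real.norm_of_nonneg (by norm_num)]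
        gcongr
      rw [norm_mul, norm_mul _ ((1 / 4 : ℝ) ^ m)]
      gcongr)
    (.of_forall fun x _ ↦
      (hasSum_linear_mul_odd_mul_geometric a b (t := 1 / 4) (by norm_num)).summable.norm)
    (intervalIntegrable_const (μ := MeasureTheory.volume))
    (.of_forall fun x hmem ↦ by
      obtain ⟨h0, h1⟩ := hx x hmem
      have h := hasSum_linear_mul_odd_mul_geometric a b
        (t := x * (1 - x)) (by rw [Real.norm_of_nonneg h0]; linarith)
      rwa [show 1 - x * (1 - x) = x ^ 2 - x + 1 by ring] at h)
  rw [integral_rational_sq_sub_self_add_one] at hlim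
  rw [funext hterm, show 2 * (a + 2 * b) / 3 + 2 * π * √3 * (a + b) / 27 =
    4 * a + 2 * (2 * b - 5 * a) / 3 + (2 * (4 * a) + 2 * (2 * b - 5 * a) + 3 * (a - b)) *
      (2 * π * √3 / 27) by ring]
  exact hlim

theorem Nat.cast_centralBinom_succ (n : ℕ) :
    ((n + 1).centralBinom : ℝ) = 2 * (2 * n + 1) / (n + 1) * n.centralBinom := by
  rw [div_mul_eq_mul_div, eq_div_iff (by positivity), mul_comm]
  exact_mod_cast Nat.succ_mul_centralBinom_succ n

noncomputable def correction (n : ℕ) : ℝ :=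
  (640000 / 3 * n ^ 4 - 832000 / 3 * n ^ 3 + 140800 * n ^ 2 - 1152) / (5 * n).centralBinom

theorem summand_eq_sum_add_correction_sub (n : ℕ) :
    (213125 * n ^ 4 - 278000 * n ^ 3 + 139975 * n ^ 2 - 26800 * n + 1596) /
        ((5 * n).centralBinom : ℝ) =
      ∑ j ∈ range 5, (-11840 / 3 * ↑(5 * n + j) + 12400 / 3) / ((5 * n + j).centralBinom : ℝ) +
        (correction n - correction (n + 1)) := by
  simp only [sum_range_succ, sum_range_zero, correction, add_zero, zero_add,
    show 5 * (n + 1) = 5 * n + 4 + 1 by ring, Nat.cast_centralBinom_succ]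
  push_cast
  field_simp
  ring

theorem summable_correction : Summable correction := by
  refine (Polynomial.summable_eval_div_centralBinom_mul
    (C (640000 / 3) * X ^ 4 - C (832000 / 3) * X ^ 3 + C 140800 * X ^ 2 - C 1152)
    (by norm_num : 0 < 5)).congr fun n ↦ ?_
  simp [correction]

theorem hasSum_summand :
    HasSum (fun n : ℕ ↦ (213125 * n ^ 4 - 278000 * n ^ 3 + 139975 * n ^ 2 - 26800 * n + 1596) /
        ((5 * n).centralBinom : ℝ))
      (1120 * π * √3 / 81 + 1728) := by
  have hlehmer := (hasSum_linear_div_centralBinom (-11840 / 3) (12400 / 3)).sum_range_mul_add 5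
  have htelescope := summable_correction.hasSum_sub_succ
  rw [show correction 0 = -1152 by simp [correction]] at htelescope
  rw [funext summand_eq_sum_add_correction_sub, show 1120 * π * √3 / 81 + 1728 =
    2 * (-11840 / 3 + 2 * (12400 / 3)) / 3 + 2 * π * √3 * (-11840 / 3 + 12400 / 3) / 27 + -1152
    by ring]
  exact hlehmer.add htelescope

theorem stmt12 :
    Summable (fun n : ℕ =>
      |(213125 * (n : ℝ) ^ 4 - 278000 * (n : ℝ) ^ 3 + 139975 * (n : ℝ) ^ 2 -
          26800 * (n : ℝ) + 1596) / (Nat.choose (10 * n) (5 * n) : ℝ)|) ∧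
    ∑' n : ℕ,
        (213125 * (n : ℝ) ^ 4 - 278000 * (n : ℝ) ^ 3 + 139975 * (n : ℝ) ^ 2 -
            26800 * (n : ℝ) + 1596) / (Nat.choose (10 * n) (5 * n) : ℝ) =
      1120 * π * Real.sqrt 3 / 81 + 1728 := by
  have hchoose : ∀ n : ℕ, Nat.choose (10 * n) (5 * n) = (5 * n).centralBinom := fun n ↦ by
    rw [Nat.centralBinom_eq_two_mul_choose, ← mul_assoc]; rfl
  simp_rw [hchoose]
  exact ⟨hasSum_summand.summable.abs, hasSum_summand.tsum_eq⟩
end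

section
/- Σ_{n=0}^∞ (2/3)_n / ((-8)^n · (7/6)_n) = √3 · 2^{2/3} · (Γ(1/3))³ / (18π), where the series converges absolutely. -/
/-!
The series is `₂F₁(2/3, 1; 7/6; -1/8)`. Writing `n! / (7/6)_n` as the Beta integral
`(1/6) ∫₀¹ tⁿ (1 - t)^(-5/6) dt` and summing the binomial series
`∑ (2/3)_n (-t/8)ⁿ / n! = (1 + t/8)^(-2/3)` under the integral gives Euler's representation
`(1/6) ∫₀¹ (1 - t)^(-5/6) (1 + t/8)^(-2/3) dt`. The rational substitution `t = 1 - (3x / (2 - x))²`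
turns it into `(4/3) 2^(2/3) ∫₀^(1/2) x^(-2/3) (1 - x)^(-2/3) dx`, which by the symmetry
`x ↦ 1 - x` is half of `B(1/3, 1/3) = Γ(1/3)² / Γ(2/3)`; the reflection formula
`Γ(1/3) Γ(2/3) = 2π / √3` finishes.
-/

open Real

/-- Rising factorial (Pochhammer symbol): `(a)_n = ∏_{i=0}^{n-1} (a + i)`. -/
noncomputable def risingFactorial (a : ℝ) (n : ℕ) : ℝ := ∏ i ∈ Finset.range n, (a + i)

open Set MeasureTheory intervalIntegral
open scoped Nat

lemma risingFactorial_succ (a : ℝ) (n : ℕ) :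
    risingFactorial a (n + 1) = risingFactorial a n * (a + n) :=
  Finset.prod_range_succ _ n

lemma risingFactorial_pos {a : ℝ} (ha : 0 < a) (n : ℕ) : 0 < risingFactorial a n :=
  Finset.prod_pos fun i _ => by positivity

lemma risingFactorial_nonneg {a : ℝ} (ha : 0 ≤ a) (n : ℕ) : 0 ≤ risingFactorial a n :=
  Finset.prod_nonneg fun i _ => by positivity

lemma risingFactorial_le_risingFactorial {a b : ℝ} (ha : 0 ≤ a) (hab : a ≤ b) (n : ℕ) :
    risingFactorial a n ≤ risingFactorial b n :=
  Finset.prod_le_prod (fun i _ => by positivity) fun i _ => by linarith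

lemma Gamma_add_nat_eq_risingFactorial_mul {a : ℝ} (ha : 0 < a) (n : ℕ) :
    Gamma (a + n) = risingFactorial a n * Gamma a := by
  induction n with
  | zero => simp [risingFactorial]
  | succ n ih =>
    rw [Nat.cast_succ, ← add_assoc, Gamma_add_one (by positivity : (0:ℝ) < a + n).ne', ih,
      risingFactorial_succ]
    ring

lemma Ring.choose_neg_eq_risingFactorial (a : ℝ) (n : ℕ) :
    Ring.choose (-a) n = (-1) ^ n * risingFactorial a n / n ! := by
  rw [Ring.choose_eq_smul, ← Polynomial.aeval_eq_smeval, Polynomial.aeval_def,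
    Polynomial.eval₂_eq_eval_map, descPochhammer_map, descPochhammer_eval_eq_prod_range,
    smul_eq_mul, inv_mul_eq_div, risingFactorial,
    ← Finset.prod_congr rfl fun (j : ℕ) _ => (neg_one_mul (a + j)).trans (neg_add' a j),
    Finset.prod_mul_distrib, Finset.prod_const, Finset.card_range]

lemma hasSum_risingFactorial_div_factorial_mul_pow (a : ℝ) {x : ℝ} (hx : |x| < 1) :
    HasSum (fun n => risingFactorial a n / n ! * x ^ n) ((1 - x) ^ (-a)) := by
  have h := (one_add_rpow_hasFPowerSeriesOnBall_zero (a := -a)).hasSum (y := -x)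
    (by simpa [Metric.mem_eball, edist_dist] using hx)
  have hterm (n : ℕ) : (-1) ^ n * risingFactorial a n / n ! * (-x) ^ n
      = risingFactorial a n / n ! * x ^ n := by
    rw [neg_pow x, mul_div_assoc, mul_mul_mul_comm, ← mul_pow, neg_one_mul, neg_neg, one_pow,
      one_mul]
  simpa only [binomialSeries, FormalMultilinearSeries.ofScalars_apply_eq,
    Ring.choose_neg_eq_risingFactorial, smul_eq_mul, hterm, zero_add, sub_eq_add_neg] using h

lemma integral_rpow_mul_one_sub_rpow {p q : ℝ} (hp : 0 < p) (hq : 0 < q) :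
    ∫ x in (0:ℝ)..1, x ^ (p - 1) * (1 - x) ^ (q - 1) = Gamma p * Gamma q / Gamma (p + q) := by
  have h := Complex.betaIntegral_eq_Gamma_mul_div p q (by simpa using hp) (by simpa using hq)
  rw [Complex.betaIntegral, ← Complex.ofReal_add, Complex.Gamma_ofReal, Complex.Gamma_ofReal,
    Complex.Gamma_ofReal, ← Complex.ofReal_mul, ← Complex.ofReal_div] at h
  refine Complex.ofReal_injective (h ▸ ?_)
  rw [← intervalIntegral.integral_ofReal]
  refine integral_congr fun x hx => ?_
  rw [uIcc_of_le zero_le_one] at hx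
  push_cast
  rw [Complex.ofReal_cpow hx.1, Complex.ofReal_cpow (sub_nonneg.mpr hx.2)]
  push_cast
  rfl

lemma integral_pow_mul_one_sub_rpow (n : ℕ) {c : ℝ} (hc : 1 < c) :
    ∫ t in (0:ℝ)..1, t ^ n * (1 - t) ^ (c - 2) = n ! / ((c - 1) * risingFactorial c n) := by
  have h := integral_rpow_mul_one_sub_rpow (p := n + 1) (q := c - 1) (by positivity)
    (by linarith)
  rw [add_sub_cancel_right, sub_sub, one_add_one_eq_two, Gamma_nat_eq_factorial,
    show (n : ℝ) + 1 + (c - 1) = (c - 1) + 1 + n by ring,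
    Gamma_add_nat_eq_risingFactorial_mul (by linarith), Gamma_add_one (by linarith)] at h
  simp only [rpow_natCast, sub_add_cancel] at h
  rw [h]
  have : 0 < Gamma (c - 1) := Gamma_pos_of_pos (by linarith)
  field_simp

lemma intervalIntegrable_pow_mul_one_sub_rpow (n : ℕ) {c : ℝ} (hc : 1 < c) :
    IntervalIntegrable (fun t => t ^ n * (1 - t) ^ (c - 2)) volume 0 1 := by
  refine intervalIntegrable_of_integral_ne_zero ?_
  rw [integral_pow_mul_one_sub_rpow n hc]
  have := risingFactorial_pos (by linarith : 0 < c) n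
  have : 0 < c - 1 := by linarith
  positivity

lemma integral_zero_half_rpow_mul_one_sub_rpow {p : ℝ} (hp : 0 < p) :
    ∫ x in (0:ℝ)..1/2, x ^ (p - 1) * (1 - x) ^ (p - 1) = Gamma p ^ 2 / (2 * Gamma (2 * p)) := by
  set f : ℝ → ℝ := fun x => x ^ (p - 1) * (1 - x) ^ (p - 1)
  have hB : ∫ x in (0:ℝ)..1, f x = Gamma p ^ 2 / Gamma (2 * p) := by
    rw [integral_rpow_mul_one_sub_rpow hp hp, two_mul, sq]
  have hf : IntervalIntegrable f volume 0 1 := by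
    refine intervalIntegrable_of_integral_ne_zero ?_
    rw [hB]
    have := Gamma_pos_of_pos hp
    have := Gamma_pos_of_pos (by positivity : 0 < 2 * p)
    positivity
  have hsymm : ∫ x in (1/2:ℝ)..1, f x = ∫ x in (0:ℝ)..1/2, f x := by
    have h := integral_comp_sub_left f 1 (a := 0) (b := 1/2)
    rw [show (1:ℝ) - 1/2 = 1/2 by norm_num, sub_zero] at h
    rw [← h]
    exact integral_congr fun x _ => by simp only [f, sub_sub_cancel, mul_comm]
  have hsplit := integral_add_adjacent_intervals (b := 1/2)
    (hf.mono_set (uIcc_subset_uIcc left_mem_uIcc (by simp [uIcc_of_le]; norm_num)))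
    (hf.mono_set (uIcc_subset_uIcc (by simp [uIcc_of_le]; norm_num) right_mem_uIcc))
  rw [hsymm, hB] at hsplit
  rw [mul_comm 2, ← div_div, ← hsplit]
  ring

lemma summable_abs_risingFactorial_div_mul_pow {a c z : ℝ} (ha : 0 ≤ a) (hac : a ≤ c)
    (hz : |z| < 1) :
    Summable fun n => |risingFactorial a n / risingFactorial c n * z ^ n| := by
  refine Summable.of_nonneg_of_le (fun n => abs_nonneg _) (fun n => ?_)
    (summable_geometric_of_lt_one (abs_nonneg z) hz)
  have hc : 0 ≤ risingFactorial c n :=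
    (risingFactorial_nonneg ha n).trans (risingFactorial_le_risingFactorial ha hac n)
  rw [abs_mul, abs_pow]
  refine mul_le_of_le_one_left (by positivity) ?_
  rw [abs_div, abs_of_nonneg hc, abs_of_nonneg (risingFactorial_nonneg ha n)]
  exact div_le_one_of_le₀ (risingFactorial_le_risingFactorial ha hac n) hc

/-- Euler's integral representation of `₂F₁(a, 1; c; z)`. -/
theorem tsum_risingFactorial_div_mul_pow_eq_integral {a c z : ℝ} (ha : 0 ≤ a) (hac : a ≤ c)
    (hc : 1 < c) (hz : |z| < 1) :
    ∑' n, risingFactorial a n / risingFactorial c n * z ^ n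
      = (c - 1) * ∫ t in (0:ℝ)..1, (1 - t) ^ (c - 2) * (1 - z * t) ^ (-a) := by
  set F : ℕ → ℝ → ℝ := fun n t =>
    (c - 1) * (risingFactorial a n / n ! * z ^ n) * (t ^ n * (1 - t) ^ (c - 2))
  have hc1 : 0 < c - 1 := by linarith
  have hbeta (n : ℕ) : 0 < (n ! : ℝ) / ((c - 1) * risingFactorial c n) := by
    have := risingFactorial_pos (by linarith : 0 < c) n
    positivity
  have hcoef (n : ℕ) : (c - 1) * (risingFactorial a n / n ! * z ^ n)
      * (n ! / ((c - 1) * risingFactorial c n))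
      = risingFactorial a n / risingFactorial c n * z ^ n := by
    have := risingFactorial_pos (by linarith : 0 < c) n
    field_simp
  have hFint (n : ℕ) : Integrable (F n) (volume.restrict (Ioc 0 1)) :=
    (intervalIntegrable_pow_mul_one_sub_rpow n hc).1.const_mul _
  have hF (n : ℕ) : ∫ t in Ioc 0 1, F n t = risingFactorial a n / risingFactorial c n * z ^ n := by
    rw [← integral_of_le zero_le_one, intervalIntegral.integral_const_mul,
      integral_pow_mul_one_sub_rpow n hc, hcoef]
  have hFnorm (n : ℕ) :
      ∫ t in Ioc 0 1, ‖F n t‖ = |risingFactorial a n / risingFactorial c n * z ^ n| := by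
    have hpt : ∀ t ∈ Ioc (0:ℝ) 1, ‖F n t‖
        = |(c - 1) * (risingFactorial a n / n ! * z ^ n)| * (t ^ n * (1 - t) ^ (c - 2)) := by
      intro t ht
      rw [norm_mul, norm_eq_abs, norm_eq_abs,
        abs_of_nonneg (mul_nonneg (pow_nonneg ht.1.le n) (rpow_nonneg (by linarith [ht.2]) _))]
    rw [setIntegral_congr_fun measurableSet_Ioc hpt, MeasureTheory.integral_const_mul,
      ← integral_of_le zero_le_one, integral_pow_mul_one_sub_rpow n hc,
      ← abs_of_pos (hbeta n), ← abs_mul, hcoef]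
  have hsum (t : ℝ) (ht : t ∈ Ioc (0:ℝ) 1) :
      HasSum (fun n => F n t) ((c - 1) * ((1 - t) ^ (c - 2) * (1 - z * t) ^ (-a))) := by
    have hzt : |z * t| < 1 := by
      rw [abs_mul, abs_of_pos ht.1]
      nlinarith [abs_nonneg z, ht.2]
    have hterm : (fun n => F n t)
        = fun n => (c - 1) * (1 - t) ^ (c - 2) * (risingFactorial a n / n ! * (z * t) ^ n) := by
      funext n
      simp only [F, mul_pow]
      ring
    rw [hterm, ← mul_assoc]
    exact (hasSum_risingFactorial_div_factorial_mul_pow a hzt).mul_left _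
  calc ∑' n, risingFactorial a n / risingFactorial c n * z ^ n
      = ∑' n, ∫ t in Ioc 0 1, F n t := tsum_congr fun n => (hF n).symm
    _ = ∫ t in Ioc 0 1, ∑' n, F n t :=
      integral_tsum_of_summable_integral_norm hFint
        (by simpa only [hFnorm] using summable_abs_risingFactorial_div_mul_pow ha hac hz)
    _ = ∫ t in Ioc 0 1, (c - 1) * ((1 - t) ^ (c - 2) * (1 - z * t) ^ (-a)) :=
      setIntegral_congr_fun measurableSet_Ioc fun t ht => (hsum t ht).tsum_eq
    _ = _ := by rw [MeasureTheory.integral_const_mul, ← integral_of_le zero_le_one]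

lemma hasDerivAt_one_sub_three_mul_div_two_sub_sq {x : ℝ} (hx : x ≠ 2) :
    HasDerivAt (fun x : ℝ => 1 - (3 * x / (2 - x)) ^ 2) (-(36 * x / (2 - x) ^ 3)) x := by
  have h2x : 2 - x ≠ 0 := sub_ne_zero.mpr (Ne.symm hx)
  have hq : HasDerivAt (fun x : ℝ => 3 * x / (2 - x)) (6 / (2 - x) ^ 2) x := by
    refine (((hasDerivAt_id' x).const_mul 3).div ((hasDerivAt_id' x).const_sub 2)
      h2x).congr_deriv ?_
    field_simp
    ring
  refine ((hq.pow 2).const_sub 1).congr_deriv ?_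
  rw [show (2:ℕ) - 1 = 1 from rfl, pow_one, Nat.cast_ofNat]
  field_simp
  ring

lemma one_sub_rpow_mul_one_add_div_eight_rpow_comp_mul_deriv {x : ℝ}
    (hx : x ∈ Ioo (0:ℝ) (1/2)) :
    (1 - (1 - (3 * x / (2 - x)) ^ 2)) ^ (-5/6 : ℝ)
      * (1 + (1 - (3 * x / (2 - x)) ^ 2) / 8) ^ (-2/3 : ℝ) * (36 * x / (2 - x) ^ 3)
      = 4 / 3 * 2 ^ (2/3 : ℝ) * (x ^ (-2/3 : ℝ) * (1 - x) ^ (-2/3 : ℝ)) := by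
  obtain ⟨hx0, hx1⟩ := hx
  have h2x : 0 < 2 - x := by linarith
  have h1x : 0 < 1 - x := by linarith
  have hA : 1 - (1 - (3 * x / (2 - x)) ^ 2) = 9 * x ^ 2 / (2 - x) ^ 2 := by
    field_simp; ring
  have hB : 1 + (1 - (3 * x / (2 - x)) ^ 2) / 8 = 9 * (1 - x) / (2 * (2 - x) ^ 2) := by
    field_simp; ring
  have h6 {y : ℝ} (hy : 0 ≤ y) (r : ℝ) : (y ^ r) ^ 6 = y ^ (r * 6) := by
    exact_mod_cast (rpow_mul_natCast hy r 6).symm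
  rw [hA, hB]
  -- all exponents are multiples of `1/6`, so both sides agree once raised to the sixth power
  refine (pow_left_inj₀ (n := 6) (by positivity) (by positivity) (by norm_num)).mp ?_
  simp only [mul_pow]
  rw [h6 (by positivity), h6 (by positivity), h6 (by positivity), h6 (by positivity),
    h6 (by positivity)]
  norm_num
  field_simp
  ring

/-- The substitution is `t = 1 - s⁶` followed by `s³ = 3x / (2 - x)`. -/
lemma integral_one_sub_rpow_mul_one_add_div_eight_rpow :
    ∫ t in (0:ℝ)..1, (1 - t) ^ (-5/6 : ℝ) * (1 + t / 8) ^ (-2/3 : ℝ)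
      = 4 / 3 * 2 ^ (2/3 : ℝ) * ∫ x in (0:ℝ)..1/2, x ^ (-2/3 : ℝ) * (1 - x) ^ (-2/3 : ℝ) := by
  have hsub := integral_comp_mul_deriv_of_deriv_nonpos
    (g := fun t : ℝ => (1 - t) ^ (-5/6 : ℝ) * (1 + t / 8) ^ (-2/3 : ℝ))
    (f := fun x : ℝ => 1 - (3 * x / (2 - x)) ^ 2) (f' := fun x => -(36 * x / (2 - x) ^ 3))
    (a := 0) (b := 1/2) ?_ ?_ ?_
  · rw [show (1:ℝ) - (3 * 0 / (2 - 0)) ^ 2 = 1 by norm_num,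
      show (1:ℝ) - (3 * (1/2) / (2 - 1/2)) ^ 2 = 0 by norm_num, integral_symm 0 1] at hsub
    rw [← neg_neg (∫ t in (0:ℝ)..1, _), ← hsub, ← intervalIntegral.integral_neg,
      ← intervalIntegral.integral_const_mul]
    refine integral_congr_Ioo_of_le (by norm_num) fun x hx => ?_
    simp only [Function.comp_apply, mul_neg, neg_neg]
    exact one_sub_rpow_mul_one_add_div_eight_rpow_comp_mul_deriv hx
  · intro x hx
    rw [uIcc_of_le (by norm_num)] at hx
    exact (hasDerivAt_one_sub_three_mul_div_two_sub_sq (by linarith [hx.2])).continuousAt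
      |>.continuousWithinAt
  · intro x hx
    rw [min_eq_left (by norm_num), max_eq_right (by norm_num)] at hx
    exact hasDerivAt_one_sub_three_mul_div_two_sub_sq (by linarith [hx.2])
  · intro x hx
    rw [min_eq_left (by norm_num), max_eq_right (by norm_num)] at hx
    obtain ⟨hx0, hx1⟩ := hx
    have : 0 < 2 - x := by linarith
    simp only [neg_nonpos]
    positivity

lemma Gamma_two_thirds : Gamma (2/3) = 2 * π / (√3 * Gamma (1/3)) := by
  have h := Gamma_mul_Gamma_one_sub (1/3)
  rw [show (1:ℝ) - 1/3 = 2/3 by norm_num, show π * (1/3) = π / 3 by ring, sin_pi_div_three] at h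
  have : 0 < Gamma (1/3) := Gamma_pos_of_pos (by norm_num)
  rw [eq_div_iff (by positivity), mul_comm, mul_assoc, h]
  field_simp

theorem stmt14 :
    Summable (fun n : ℕ =>
      |risingFactorial (2 / 3) n / ((-8 : ℝ) ^ n * risingFactorial (7 / 6) n)|) ∧
    ∑' n : ℕ, risingFactorial (2 / 3) n / ((-8 : ℝ) ^ n * risingFactorial (7 / 6) n) =
      Real.sqrt 3 * (2 : ℝ) ^ ((2 : ℝ) / 3) * (Real.Gamma (1 / 3)) ^ 3 / (18 * π) := by
  have hterm (n : ℕ) : risingFactorial (2 / 3) n / ((-8 : ℝ) ^ n * risingFactorial (7 / 6) n)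
      = risingFactorial (2 / 3) n / risingFactorial (7 / 6) n * (-1 / 8) ^ n := by
    rw [mul_comm, ← div_div, div_eq_mul_inv _ ((-8 : ℝ) ^ n), ← inv_pow]
    norm_num
  simp only [hterm]
  refine ⟨summable_abs_risingFactorial_div_mul_pow (by norm_num) (by norm_num) (by norm_num), ?_⟩
  have hintegrand : (fun t : ℝ => (1 - t) ^ ((7 / 6 : ℝ) - 2) * (1 - -1 / 8 * t) ^ (-(2 / 3 : ℝ)))
      = fun t => (1 - t) ^ (-5/6 : ℝ) * (1 + t / 8) ^ (-2/3 : ℝ) := by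
    funext t
    ring_nf
  have hbeta := integral_zero_half_rpow_mul_one_sub_rpow (p := 1 / 3) (by norm_num)
  rw [show (1 / 3 : ℝ) - 1 = -2 / 3 by norm_num, show 2 * (1 / 3 : ℝ) = 2 / 3 by norm_num] at hbeta
  rw [tsum_risingFactorial_div_mul_pow_eq_integral (by norm_num) (by norm_num) (by norm_num)
    (by norm_num), hintegrand, integral_one_sub_rpow_mul_one_add_div_eight_rpow, hbeta]
  have : 0 < Gamma (1/3) := Gamma_pos_of_pos (by norm_num)
  rw [Gamma_two_thirds]
  field_simp
  ring
end
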